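/- arXiv:2405.08716 — 5 statements merged into one kernel-verified Lean document; each statement's English description precedes it below -/
import Mathlib

section
/- (Theorem 1) Let H be a complex vector space carrying two commuting Clifford families: γ_1^1,…,γ_1^{n_1} of signature η_1 and γ_2^1,…,γ_2^{n_2} of signature η_2. Define, for combined indices A,B ∈ {1,…,n_1+n_2}: T^{ab} = −½ γ_1^a γ_1^b for a ≠ b in {1,…,n_1} (and T^{aa}=0); T^{n_1+α, n_1+β} = ½ γ_2^α γ_2^β for α ≠ β (and zero when α = β); T^{a, n_1+β} = ½ γ_1^a γ_2^β; and T^{n_1+α, b} = −½ γ_1^b γ_2^α. Define the combined signs η^A = −η_1^a for A = a ≤ n_1 and η^A = η_2^α for A = n_1+α. Then for all A,B,C,D: [T^{AB}, T^{CD}] = η^B δ^{BC} T^{AD} − η^A δ^{AC} T^{BD} + η^B δ^{BD} T^{CA} − η^A δ^{AD} T^{CB}. In other words, the quadratic monomials in pairs of generators taken from the two commuting Clifford families determine a representation on H of the Lie algebra so(q_1+p_2, p_1+q_2), where (p_i, q_i) counts the +1 and −1 signs of η_i. -/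
/-!
Merge the two families into one family `Γ` on `ι₁ ⊕ ι₂` with signs `s = (-1) ⊕ 1`. It satisfies
the twisted relation `Γ_X Γ_Y + s_X s_Y Γ_Y Γ_X = 2 s_X η_X δ_XY` with `η = (-η₁) ⊕ η₂`, and
`T^{XY} = ½ s_Y Γ_X Γ_Y - ½ η_X δ_XY`. Moving `Γ_C` to the front of `Γ_A Γ_B Γ_C` costs the sign
`s_A s_B` and produces two contraction terms; doing this with `Γ_C` and then `Γ_D` the sign squares
to `1`, so the commutator of two quadratics is a sum of four contractions, which after rescaling
by `¼ s_B s_D` is exactly the `so`-relation.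
-/

section

variable {ι : Type*} [DecidableEq ι]

theorem apply_mul_ite_eq_swap {M : Type*} [MulZeroOneClass M] (η : ι → M) (X Y : ι) :
    η X * (if X = Y then 1 else 0) = η Y * (if Y = X then 1 else 0) := by
  by_cases hXY : X = Y
  · subst hXY; rfl
  · simp [hXY, Ne.symm hXY]

section CommRing

variable {k R : Type*} [CommRing k] [Ring R] [Algebra k R]

def IsCliffordFamily (γ : ι → R) (η : ι → k) : Prop :=
  ∀ a b, γ a * γ b + γ b * γ a = (2 * η a * (if a = b then 1 else 0)) • (1 : R)

structure IsTwistedCliffordFamily (Γ : ι → R) (s η : ι → k) : Prop where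
  sign_mul_self : ∀ X, s X * s X = 1
  mul_add_mul : ∀ X Y,
    Γ X * Γ Y + (s X * s Y) • (Γ Y * Γ X) = (2 * s X * η X * (if X = Y then 1 else 0)) • (1 : R)

theorem isTwistedCliffordFamily_sumElim {ι₁ ι₂ : Type*} [DecidableEq ι₁] [DecidableEq ι₂]
    {γ₁ : ι₁ → R} {γ₂ : ι₂ → R} {η₁ : ι₁ → k} {η₂ : ι₂ → k}
    (h₁ : IsCliffordFamily γ₁ η₁) (h₂ : IsCliffordFamily γ₂ η₂)
    (hcomm : ∀ a α, γ₁ a * γ₂ α = γ₂ α * γ₁ a) :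
    IsTwistedCliffordFamily (Sum.elim γ₁ γ₂) (Sum.elim (fun _ ↦ -1) (fun _ ↦ 1))
      (Sum.elim (fun a ↦ -η₁ a) η₂) where
  sign_mul_self := by rintro (a | α) <;> simp
  mul_add_mul := by
    rintro (a | α) (b | β)
    · simpa [neg_mul_neg] using h₁ a b
    · simp [hcomm]
    · simp [hcomm]
    · simpa using h₂ α β

namespace IsTwistedCliffordFamily

variable {Γ : ι → R} {s η : ι → k} (h : IsTwistedCliffordFamily Γ s η)
include h

theorem mul_eq (X Y : ι) :
    Γ X * Γ Y = -(s X * s Y) • (Γ Y * Γ X) + (2 * s X * η X * (if X = Y then 1 else 0)) • 1 := by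
  rw [← h.mul_add_mul]; module

theorem sign_mul_sign_mul_ite (X Y : ι) :
    s X * s Y * (if X = Y then 1 else 0) = if X = Y then 1 else 0 := by
  split_ifs with hXY
  · subst hXY; simp [h.sign_mul_self]
  · simp

theorem mul_mul_eq (A B C : ι) :
    Γ A * Γ B * Γ C = (s A * s B) • (Γ C * (Γ A * Γ B))
      + (2 * s B * η B * (if B = C then 1 else 0)) • Γ A
      - (2 * s B * η A * (if A = C then 1 else 0)) • Γ B := by
  have hAC := h.sign_mul_sign_mul_ite A C
  calc Γ A * Γ B * Γ C = Γ A * (Γ B * Γ C) := mul_assoc _ _ _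
    _ = -(s B * s C) • (Γ A * Γ C * Γ B) + (2 * s B * η B * (if B = C then 1 else 0)) • Γ A := by
        rw [h.mul_eq B C]; simp only [mul_add, mul_smul_comm, mul_one, mul_assoc]
    _ = _ := by
        rw [h.mul_eq A C]
        simp only [add_mul, smul_mul_assoc, one_mul, mul_assoc]
        linear_combination (norm := module) (s A * s B * h.sign_mul_self C) • (Γ C * (Γ A * Γ B))
          - (2 * s B * η A * hAC) • Γ B

theorem commutator_mul_mul (A B C D : ι) :
    Γ A * Γ B * (Γ C * Γ D) - Γ C * Γ D * (Γ A * Γ B) =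
      (2 * s B * η B * (if B = C then 1 else 0)) • (Γ A * Γ D)
      - (2 * s B * η A * (if A = C then 1 else 0)) • (Γ B * Γ D)
      + (2 * s A * η B * (if B = D then 1 else 0)) • (Γ C * Γ A)
      - (2 * s A * η A * (if A = D then 1 else 0)) • (Γ C * Γ B) := by
  have hA := h.sign_mul_self A
  have hB := h.sign_mul_self B
  rw [sub_eq_iff_eq_add]
  calc Γ A * Γ B * (Γ C * Γ D) = Γ A * Γ B * Γ C * Γ D := (mul_assoc _ _ _).symm
    _ = (s A * s B) • (Γ C * (Γ A * Γ B * Γ D))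
        + (2 * s B * η B * (if B = C then 1 else 0)) • (Γ A * Γ D)
        - (2 * s B * η A * (if A = C then 1 else 0)) • (Γ B * Γ D) := by
      rw [h.mul_mul_eq A B C]
      simp only [add_mul, sub_mul, smul_mul_assoc, mul_assoc]
    _ = _ := by
      rw [h.mul_mul_eq A B D]
      simp only [mul_add, mul_sub, mul_smul_comm, mul_assoc]
      linear_combination (norm := module)
        (s B * s B * hA + hB) • (Γ C * (Γ D * (Γ A * Γ B)))
        + (2 * s A * η B * (if B = D then 1 else 0) * hB) • (Γ C * Γ A)
        - (2 * s A * η A * (if A = D then 1 else 0) * hB) • (Γ C * Γ B)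

end IsTwistedCliffordFamily

end CommRing

section Field

variable {k R : Type*} [Field k] [CharZero k] [Ring R] [Algebra k R]

/-- The scalar term makes the diagonal vanish (`soGenerator_self`), so one formula covers
all `X, Y`. -/
def soGenerator (Γ : ι → R) (s η : ι → k) (X Y : ι) : R :=
  (1 / 2 * s Y) • (Γ X * Γ Y) - (1 / 2 * η X * (if X = Y then 1 else 0)) • (1 : R)

namespace IsTwistedCliffordFamily

variable {Γ : ι → R} {s η : ι → k} (h : IsTwistedCliffordFamily Γ s η)
include h

theorem soGenerator_self (X : ι) : soGenerator Γ s η X X = 0 := by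
  have hX := h.sign_mul_self X
  have hΓ := h.mul_add_mul X X
  simp only [soGenerator, ↓reduceIte] at hΓ ⊢
  linear_combination (norm := module) (1 / 4 * s X) • hΓ
    - (1 / 4 * s X * hX) • (Γ X * Γ X) + (1 / 2 * η X * hX) • (1 : R)

theorem soGenerator_commutator (A B C D : ι) :
    soGenerator Γ s η A B * soGenerator Γ s η C D - soGenerator Γ s η C D * soGenerator Γ s η A B
      = (η B * (if B = C then 1 else 0)) • soGenerator Γ s η A D
        - (η A * (if A = C then 1 else 0)) • soGenerator Γ s η B D
        + (η B * (if B = D then 1 else 0)) • soGenerator Γ s η C A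
        - (η A * (if A = D then 1 else 0)) • soGenerator Γ s η C B := by
  have hquad := h.commutator_mul_mul A B C D
  have hB := h.sign_mul_self B
  have hBD := h.sign_mul_sign_mul_ite B D
  have hAD := h.sign_mul_sign_mul_ite A D
  have hCA := apply_mul_ite_eq_swap η C A
  have hCB := apply_mul_ite_eq_swap η C B
  simp only [soGenerator, sub_mul, mul_sub, mul_one, one_mul, smul_mul_assoc, mul_smul_comm]
  linear_combination (norm := module) (1 / 4 * s B * s D) • hquad
    + (1 / 2 * s D * η B * (if B = C then 1 else 0) * hB) • (Γ A * Γ D)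
    - (1 / 2 * s D * η A * (if A = C then 1 else 0) * hB) • (Γ B * Γ D)
    + (1 / 2 * s A * η B * hBD) • (Γ C * Γ A)
    - (1 / 2 * s B * η A * hAD) • (Γ C * Γ B)
    - (1 / 2 * η A * (if A = D then 1 else 0) * hCB) • (1 : R)
    + (1 / 2 * η B * (if B = D then 1 else 0) * hCA) • (1 : R)

end IsTwistedCliffordFamily

end Field

end

theorem commuting_clifford_so_representation_general
    {H : Type*} [AddCommGroup H] [Module ℂ H] {n₁ n₂ : ℕ}
    (γ₁ : Fin n₁ → Module.End ℂ H) (η₁ : Fin n₁ → ℂ)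
    (γ₂ : Fin n₂ → Module.End ℂ H) (η₂ : Fin n₂ → ℂ)
    (hcl₁ : ∀ a b, γ₁ a * γ₁ b + γ₁ b * γ₁ a
      = (2 * η₁ a * (if a = b then 1 else 0)) • (1 : Module.End ℂ H))
    (hcl₂ : ∀ α β, γ₂ α * γ₂ β + γ₂ β * γ₂ α
      = (2 * η₂ α * (if α = β then 1 else 0)) • (1 : Module.End ℂ H))
    (hcomm : ∀ a α, γ₁ a * γ₂ α = γ₂ α * γ₁ a)
    -- combined generators indexed by `Fin n₁ ⊕ Fin n₂` (i.e. `{1,…,n₁+n₂}`)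
    (T : Fin n₁ ⊕ Fin n₂ → Fin n₁ ⊕ Fin n₂ → Module.End ℂ H)
    (hT₁₁ : ∀ a b : Fin n₁,
      T (.inl a) (.inl b) = if a = b then 0 else (-(1 / 2) : ℂ) • (γ₁ a * γ₁ b))
    (hT₂₂ : ∀ α β : Fin n₂,
      T (.inr α) (.inr β) = if α = β then 0 else ((1 / 2) : ℂ) • (γ₂ α * γ₂ β))
    (hT₁₂ : ∀ (a : Fin n₁) (β : Fin n₂),
      T (.inl a) (.inr β) = ((1 / 2) : ℂ) • (γ₁ a * γ₂ β))
    (hT₂₁ : ∀ (α : Fin n₂) (b : Fin n₁),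
      T (.inr α) (.inl b) = (-(1 / 2) : ℂ) • (γ₁ b * γ₂ α))
    -- combined signature `η = (−η₁) ⊕ η₂`
    (η : Fin n₁ ⊕ Fin n₂ → ℂ)
    (hHη₁ : ∀ a : Fin n₁, η (.inl a) = -η₁ a)
    (hHη₂ : ∀ α : Fin n₂, η (.inr α) = η₂ α) :
    ∀ A B C D : Fin n₁ ⊕ Fin n₂,
      T A B * T C D - T C D * T A B =
        (η B * (if B = C then 1 else 0)) • T A D
        - (η A * (if A = C then 1 else 0)) • T B D
        + (η B * (if B = D then 1 else 0)) • T C A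
        - (η A * (if A = D then 1 else 0)) • T C B := by
  obtain rfl : η = Sum.elim (fun a ↦ -η₁ a) η₂ := funext (Sum.rec hHη₁ hHη₂)
  have hΓ := isTwistedCliffordFamily_sumElim hcl₁ hcl₂ hcomm
  obtain rfl : T = soGenerator (Sum.elim γ₁ γ₂) (Sum.elim (fun _ ↦ -1) (fun _ ↦ 1))
      (Sum.elim (fun a ↦ -η₁ a) η₂) := by
    funext X Y
    rcases X with a | α <;> rcases Y with b | β
    · rw [hT₁₁]
      split_ifs with hab
      · subst hab; exact (hΓ.soGenerator_self _).symm
      · simp [soGenerator, hab]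
    · simp [soGenerator, hT₁₂]
    · simp [soGenerator, hT₂₁, hcomm]
    · rw [hT₂₂]
      split_ifs with hαβ
      · subst hαβ; exact (hΓ.soGenerator_self _).symm
      · simp [soGenerator, hαβ]
  exact hΓ.soGenerator_commutator

/-- Theorem 1 of the paper: two commuting Clifford families of signatures
`η₁` (type `(p₁,q₁)`) and `η₂` (type `(p₂,q₂)`) on a complex vector space `H` determine,
via the quadratic monomials in the combined generators, a representation on `H` of the
Lie algebra `so(q₁+p₂, p₁+q₂)`, i.e. the generators `T^{AB}` satisfy the `so`-commutation
relations for the combined signature `η = (−η₁) ⊕ η₂`. -/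
theorem commuting_clifford_so_representation
    {H : Type*} [AddCommGroup H] [Module ℂ H] {n₁ n₂ : ℕ}
    (γ₁ : Fin n₁ → Module.End ℂ H) (η₁ : Fin n₁ → ℂ)
    (γ₂ : Fin n₂ → Module.End ℂ H) (η₂ : Fin n₂ → ℂ)
    (hη₁ : ∀ a, η₁ a = 1 ∨ η₁ a = -1)
    (hη₂ : ∀ α, η₂ α = 1 ∨ η₂ α = -1)
    (hcl₁ : ∀ a b, γ₁ a * γ₁ b + γ₁ b * γ₁ a
      = (2 * η₁ a * (if a = b then 1 else 0)) • (1 : Module.End ℂ H))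
    (hcl₂ : ∀ α β, γ₂ α * γ₂ β + γ₂ β * γ₂ α
      = (2 * η₂ α * (if α = β then 1 else 0)) • (1 : Module.End ℂ H))
    (hcomm : ∀ a α, γ₁ a * γ₂ α = γ₂ α * γ₁ a)
    -- combined generators indexed by `Fin n₁ ⊕ Fin n₂` (i.e. `{1,…,n₁+n₂}`)
    (T : Fin n₁ ⊕ Fin n₂ → Fin n₁ ⊕ Fin n₂ → Module.End ℂ H)
    (hT₁₁ : ∀ a b : Fin n₁,
      T (.inl a) (.inl b) = if a = b then 0 else (-(1 / 2) : ℂ) • (γ₁ a * γ₁ b))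
    (hT₂₂ : ∀ α β : Fin n₂,
      T (.inr α) (.inr β) = if α = β then 0 else ((1 / 2) : ℂ) • (γ₂ α * γ₂ β))
    (hT₁₂ : ∀ (a : Fin n₁) (β : Fin n₂),
      T (.inl a) (.inr β) = ((1 / 2) : ℂ) • (γ₁ a * γ₂ β))
    (hT₂₁ : ∀ (α : Fin n₂) (b : Fin n₁),
      T (.inr α) (.inl b) = (-(1 / 2) : ℂ) • (γ₁ b * γ₂ α))
    -- combined signature `η = (−η₁) ⊕ η₂`
    (η : Fin n₁ ⊕ Fin n₂ → ℂ)
    (hHη₁ : ∀ a : Fin n₁, η (.inl a) = -η₁ a)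
    (hHη₂ : ∀ α : Fin n₂, η (.inr α) = η₂ α) :
    ∀ A B C D : Fin n₁ ⊕ Fin n₂,
      T A B * T C D - T C D * T A B =
        (η B * (if B = C then 1 else 0)) • T A D
        - (η A * (if A = C then 1 else 0)) • T B D
        + (η B * (if B = D then 1 else 0)) • T C A
        - (η A * (if A = D then 1 else 0)) • T C B :=
  commuting_clifford_so_representation_general γ₁ η₁ γ₂ η₂ hcl₁ hcl₂ hcomm T hT₁₁ hT₂₂ hT₁₂ hT₂₁ η
    hHη₁ hHη₂
end

section
/- Let γ^1,…,γ^n be a Clifford family of signature η on a complex vector space H with n even, with p indices where η^a = +1 and q where η^a = −1, and set s = q − p, P = γ^1⋯γ^n, and γ = i^{s(s+1)/2} P. Let J be a bijective conjugate-linear map on H with J² = ε·id (ε ∈ {+1,−1}) and J γ^a = γ^a J for all a. Then the conjugate-linear map Ĵ = J P satisfies: Ĵ² = ε·(−1)^{s(s+1)/2}·id, Ĵ γ^a = −γ^a Ĵ for all a, and Ĵ γ = (−1)^{s(s+1)/2} γ Ĵ. -/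
/-- For a Clifford family with `n = 2m` even, `s = q − p`,
`P = γ¹⋯γⁿ`, chirality `γ = i^{s(s+1)/2} P`, and a bijective conjugate-linear `J`
with `J² = ε·id` commuting with all `γ^a`, the second real structure `Ĵ = J P`
satisfies `Ĵ² = ε(−1)^{s(s+1)/2}·id`, `Ĵ γ^a = −γ^a Ĵ`, and `Ĵ γ = (−1)^{s(s+1)/2} γ Ĵ`. -/
theorem second_real_structure_properties
    {H : Type*} [AddCommGroup H] [Module ℂ H] {m : ℕ}
    (γ : Fin (2 * m) → Module.End ℂ H) (η : Fin (2 * m) → ℂ)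
    (hη : ∀ a, η a = 1 ∨ η a = -1)
    (hcl : ∀ a b, γ a * γ b + γ b * γ a
      = (2 * η a * (if a = b then 1 else 0)) • (1 : Module.End ℂ H))
    (P : Module.End ℂ H)
    (hP : P = ((List.finRange (2 * m)).map γ).prod)
    (p q : ℕ)
    (hp : p = (Finset.univ.filter fun a => η a = 1).card)
    (hq : q = (Finset.univ.filter fun a => η a = -1).card)
    (s : ℤ) (hs : s = (q : ℤ) - (p : ℤ))
    (γchir : Module.End ℂ H)
    (hγchir : γchir = Complex.I ^ (s * (s + 1) / 2) • P)
    (J : H → H)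
    (hJadd : ∀ x y, J (x + y) = J x + J y)
    (hJsmul : ∀ (c : ℂ) (x : H), J (c • x) = (starRingEnd ℂ c) • J x)
    (hJbij : Function.Bijective J)
    (ε : ℂ) (hε : ε = 1 ∨ ε = -1)
    (hJsq : ∀ x, J (J x) = ε • x)
    (hJγ : ∀ (a : Fin (2 * m)) (x : H), J (γ a x) = γ a (J x))
    (Jhat : H → H) (hJhat : ∀ x, Jhat x = J (P x)) :
    (∀ x, Jhat (Jhat x) = (ε * (-1 : ℂ) ^ (s * (s + 1) / 2)) • x)
    ∧ (∀ (a : Fin (2 * m)) (x : H), Jhat (γ a x) = -(γ a (Jhat x)))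
    ∧ (∀ x, Jhat (γchir x) = ((-1 : ℂ) ^ (s * (s + 1) / 2)) • γchir (Jhat x)) := by
  classical
  -- basic Clifford relations
  have hsq : ∀ a, γ a * γ a = η a • (1 : Module.End ℂ H) := by
    intro a
    have h := hcl a a
    rw [if_pos rfl, mul_one] at h
    have h2 : (2:ℂ) • (γ a * γ a) = (2:ℂ) • (η a • (1 : Module.End ℂ H)) := by
      rw [two_smul, smul_smul]; exact h
    exact smul_right_injective _ (two_ne_zero) h2
  have hanti : ∀ a b : Fin (2*m), a ≠ b → γ a * γ b = -(γ b * γ a) := by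
    intro a b hab
    have h := hcl a b
    rw [if_neg hab, mul_zero, zero_smul] at h
    exact eq_neg_of_add_eq_zero_left h
  -- moving γ a across a product avoiding a
  have key1 : ∀ (a : Fin (2*m)) (L : List (Fin (2*m))), a ∉ L →
      γ a * ((L.map γ).prod) = ((-1:ℂ) ^ L.length) • ((L.map γ).prod * γ a) := by
    intro a L
    induction L with
    | nil => intro _; simp
    | cons b L ih =>
      intro hmem
      have hab : a ≠ b := fun h => hmem (h ▸ List.mem_cons_self (a := b) (l := L))
      have haL : a ∉ L := fun h => hmem (List.mem_cons_of_mem _ h)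
      simp only [List.map_cons, List.prod_cons, List.length_cons]
      calc γ a * (γ b * (L.map γ).prod)
          = (γ a * γ b) * (L.map γ).prod := by rw [mul_assoc]
        _ = (-(γ b * γ a)) * (L.map γ).prod := by rw [hanti a b hab]
        _ = -(γ b * (γ a * (L.map γ).prod)) := by rw [neg_mul, mul_assoc]
        _ = -(γ b * (((-1:ℂ)^L.length) • ((L.map γ).prod * γ a))) := by rw [ih haL]
        _ = ((-1:ℂ)^(L.length+1)) • (γ b * (L.map γ).prod * γ a) := by
            rw [mul_smul_comm, ← neg_smul, pow_succ, mul_assoc]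
            congr 1
            ring
  -- moving γ a across a product containing a once
  have key2 : ∀ (L : List (Fin (2*m))) (a : Fin (2*m)), a ∈ L → L.Nodup →
      γ a * ((L.map γ).prod) = ((-1:ℂ) ^ (L.length - 1)) • ((L.map γ).prod * γ a) := by
    intro L
    induction L with
    | nil => intro a h; exact absurd h List.not_mem_nil
    | cons b L ih =>
      intro a hmem hnd
      have hndL : L.Nodup := (List.nodup_cons.1 hnd).2
      have hbL : b ∉ L := (List.nodup_cons.1 hnd).1
      simp only [List.map_cons, List.prod_cons, List.length_cons, Nat.add_sub_cancel]
      by_cases hab : a = b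
      · subst hab
        calc γ a * (γ a * (L.map γ).prod)
            = (γ a * γ a) * (L.map γ).prod := by rw [mul_assoc]
          _ = (η a • 1) * (L.map γ).prod := by rw [hsq a]
          _ = η a • (L.map γ).prod := by rw [smul_mul_assoc, one_mul]
          _ = ((-1:ℂ)^L.length) • (γ a * ((L.map γ).prod * γ a)) := by
              rw [← mul_assoc, key1 a L hbL, smul_mul_assoc, smul_smul, ← pow_add,
                mul_assoc, hsq a, mul_smul_comm, mul_one]
              have he : Even (L.length + L.length) := ⟨L.length, rfl⟩
              rw [he.neg_one_pow, one_smul]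
          _ = ((-1:ℂ)^L.length) • ((γ a * (L.map γ).prod) * γ a) := by rw [mul_assoc]
      · have haL : a ∈ L := by
          rcases List.mem_cons.1 hmem with h | h
          · exact absurd h hab
          · exact h
        obtain ⟨t, ht⟩ : ∃ t, L.length = t + 1 :=
          ⟨L.length - 1, by have := List.length_pos_iff.2 (List.ne_nil_of_mem haL); omega⟩
        calc γ a * (γ b * (L.map γ).prod)
            = (γ a * γ b) * (L.map γ).prod := by rw [mul_assoc]
          _ = -(γ b * (γ a * (L.map γ).prod)) := by rw [hanti a b hab, neg_mul, mul_assoc]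
          _ = -(γ b * (((-1:ℂ)^(L.length-1)) • ((L.map γ).prod * γ a))) := by
              rw [ih a haL hndL]
          _ = ((-1:ℂ)^L.length) • ((γ b * (L.map γ).prod) * γ a) := by
              rw [mul_smul_comm, ← neg_smul, mul_assoc, ht]
              simp only [Nat.add_sub_cancel]
              rw [pow_succ]
              congr 1
              ring
  -- square of a nodup product
  have key3 : ∀ (L : List (Fin (2*m))), L.Nodup →
      ((L.map γ).prod) * ((L.map γ).prod)
        = (((-1:ℂ) ^ (L.length.choose 2)) * ((L.map η).prod)) • 1 := by
    intro L
    induction L with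
    | nil => simp
    | cons b L ih =>
      intro hnd
      have hndL : L.Nodup := (List.nodup_cons.1 hnd).2
      have hbL : b ∉ L := (List.nodup_cons.1 hnd).1
      have hQb : (L.map γ).prod * γ b = ((-1:ℂ) ^ L.length) • (γ b * (L.map γ).prod) := by
        have h := key1 b L hbL
        have h2 := congrArg (fun z => ((-1:ℂ) ^ L.length) • z) h
        simp only [smul_smul, ← pow_add] at h2
        have he : Even (L.length + L.length) := ⟨L.length, rfl⟩
        rw [he.neg_one_pow, one_smul] at h2
        rw [← h2]
      simp only [List.map_cons, List.prod_cons, List.length_cons]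
      calc (γ b * (L.map γ).prod) * (γ b * (L.map γ).prod)
          = γ b * (((L.map γ).prod * γ b) * (L.map γ).prod) := by
            rw [mul_assoc, mul_assoc]
        _ = γ b * ((((-1:ℂ) ^ L.length) • (γ b * (L.map γ).prod)) * (L.map γ).prod) := by
            rw [hQb]
        _ = ((-1:ℂ) ^ L.length) • ((γ b * γ b) * ((L.map γ).prod * (L.map γ).prod)) := by
            simp only [smul_mul_assoc, mul_smul_comm, mul_assoc]
        _ = ((-1:ℂ) ^ L.length) • ((η b • 1)
              * ((((-1:ℂ) ^ (L.length.choose 2)) * ((L.map η).prod)) • 1)) := by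
            rw [hsq b, ih hndL]
        _ = (((-1:ℂ) ^ ((L.length+1).choose 2)) * (η b * (L.map η).prod)) • 1 := by
            rw [smul_mul_smul_comm, one_mul, smul_smul, Nat.choose_succ_succ,
              Nat.choose_one_right, pow_add]
            congr 1
            ring
  -- counting facts
  have hpq : p + q = 2 * m := by
    have hfil : (Finset.univ.filter fun a => η a = -1)
        = (Finset.univ.filter fun a : Fin (2*m) => ¬ η a = 1) := by
      apply Finset.filter_congr
      intro a _
      constructor
      · intro h h1; rw [h1] at h; norm_num at h
      · intro h; rcases hη a with h1 | h1
        · exact absurd h1 h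
        · exact h1
    rw [hp, hq, hfil, Finset.card_filter_add_card_filter_not]
    simp
  have hprodη : (∏ a, η a) = (-1:ℂ) ^ q := by
    rw [← Finset.prod_filter_mul_prod_filter_not Finset.univ (fun a => η a = 1)]
    rw [Finset.prod_eq_one (fun a ha => (Finset.mem_filter.1 ha).2), one_mul]
    have hfil : (Finset.univ.filter fun a : Fin (2*m) => ¬ η a = 1)
        = (Finset.univ.filter fun a => η a = -1) := by
      apply Finset.filter_congr
      intro a _
      constructor
      · intro h; rcases hη a with h1 | h1
        · exact absurd h1 h
        · exact h1
      · intro h h1; rw [h1] at h; norm_num at h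
    rw [Finset.prod_congr hfil (fun a ha => (Finset.mem_filter.1 ha).2)]
    rw [Finset.prod_const, hq]
  -- the sign
  have hkey : ((-1:ℂ) ^ ((2*m).choose 2)) * ((-1:ℂ) ^ q) = (-1:ℂ) ^ (s * (s + 1) / 2) := by
    set k : ℤ := (q:ℤ) - (m:ℤ) with hk
    have hs2 : s = 2 * k := by omega
    have hediv : s * (s + 1) / 2 = k * (2 * k + 1) := by
      rw [hs2]
      have h : 2 * k * (2 * k + 1) = 2 * (k * (2 * k + 1)) := by ring
      rw [h, Int.mul_ediv_cancel_left _ (by norm_num)]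
    have hrhs : (-1:ℂ) ^ (s * (s + 1) / 2) = (-1:ℂ) ^ k := by
      rw [hediv]
      have h : k * (2 * k + 1) = 2 * (k * k) + k := by ring
      rw [h, zpow_add₀ (by norm_num : (-1:ℂ) ≠ 0), zpow_mul]
      norm_num
    have hk2 : (-1:ℂ) ^ k = (-1:ℂ) ^ q * (-1:ℂ) ^ m := by
      rw [hk, zpow_sub₀ (by norm_num : (-1:ℂ) ≠ 0), zpow_natCast, zpow_natCast,
        div_eq_mul_inv, ← inv_pow, inv_neg, inv_one]
    have hch : (2*m).choose 2 = 2*(m*(m-1)) + m := by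
      rw [Nat.choose_two_right]
      rcases m with _ | t
      · rfl
      · have h1 : 2 * (t+1) = 2*t+2 := by ring
        have h2 : (t+1) - 1 = t := by omega
        have h2' : 2*t+2 - 1 = 2*t+1 := by omega
        rw [h2, h1, h2']
        have h3 : (2*t+2)*(2*t+1) = 2 * (2*t*t + 3*t + 1) := by ring
        rw [h3, Nat.mul_div_cancel_left _ (by norm_num)]
        ring
    rw [hch, hrhs, hk2, pow_add, pow_mul]
    norm_num
    ring
  -- P squared
  have hPP : P * P = ((-1:ℂ) ^ (s * (s + 1) / 2)) • 1 := by
    rw [hP, key3 _ (List.nodup_finRange _)]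
    congr 1
    rw [List.length_finRange, ← Fin.prod_univ_def, hprodη, hkey]
  have hPPx : ∀ x, P (P x) = ((-1:ℂ) ^ (s * (s + 1) / 2)) • x := by
    intro x
    have h := LinearMap.congr_fun hPP x
    simpa [Module.End.mul_apply] using h
  -- P anticommutes with each γ a
  have hPγ : ∀ a : Fin (2*m), P * γ a = -(γ a * P) := by
    intro a
    have hm : 0 < 2 * m := a.pos
    have h := key2 (List.finRange (2*m)) a (List.mem_finRange a) (List.nodup_finRange _)
    rw [List.length_finRange] at h
    have hodd : Odd (2*m - 1) := ⟨m - 1, by omega⟩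
    rw [hodd.neg_one_pow, neg_one_smul, ← hP] at h
    have h2 := congrArg Neg.neg h
    rw [neg_neg] at h2
    exact h2.symm
  -- J basics
  have hJ0 : J 0 = 0 := by
    have h := hJadd 0 0
    rw [add_zero] at h
    exact left_eq_add.1 h
  have hJneg : ∀ y, J (-y) = -(J y) := by
    intro y
    have h : J (y + (-y)) = J y + J (-y) := hJadd y (-y)
    rw [add_neg_cancel, hJ0] at h
    exact eq_neg_of_add_eq_zero_right h.symm
  -- J commutes with products of gammas, in particular with P
  have hJP : ∀ x, J (P x) = P (J x) := by
    rw [hP]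
    have : ∀ (L : List (Fin (2*m))) (x : H),
        J (((L.map γ).prod) x) = ((L.map γ).prod) (J x) := by
      intro L
      induction L with
      | nil => intro x; simp [Module.End.one_apply]
      | cons b L ih =>
        intro x
        simp only [List.map_cons, List.prod_cons, Module.End.mul_apply]
        rw [hJγ b, ih x]
    exact this _
  -- conjugation facts
  have hconjc : (starRingEnd ℂ) ((-1:ℂ) ^ (s * (s + 1) / 2)) = (-1:ℂ) ^ (s * (s + 1) / 2) := by
    rw [map_zpow₀]
    norm_num
  have hconjI : (starRingEnd ℂ) (Complex.I ^ (s * (s + 1) / 2))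
      = ((-1:ℂ) ^ (s * (s + 1) / 2)) * Complex.I ^ (s * (s + 1) / 2) := by
    rw [map_zpow₀, Complex.conj_I,
      show (-Complex.I) = (-1) * Complex.I by ring, mul_zpow]
  refine ⟨?_, ?_, ?_⟩
  · -- Jhat squared
    intro x
    calc Jhat (Jhat x) = J (P (J (P x))) := by rw [hJhat, hJhat]
      _ = J (J (P (P x))) := by rw [← hJP (P x)]
      _ = ε • (P (P x)) := hJsq _
      _ = ε • (((-1:ℂ) ^ (s * (s + 1) / 2)) • x) := by rw [hPPx]
      _ = (ε * (-1:ℂ) ^ (s * (s + 1) / 2)) • x := by rw [smul_smul]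
  · -- Jhat anticommutes with γ a
    intro a x
    have hPx : P ((γ a) x) = -((γ a) (P x)) := by
      have h := LinearMap.congr_fun (hPγ a) x
      simpa [Module.End.mul_apply] using h
    rw [hJhat, hPx, hJneg, hJγ, hJhat]
  · -- chirality
    intro x
    set e : ℤ := s * (s + 1) / 2 with he
    set c : ℂ := (-1:ℂ) ^ e with hc
    calc Jhat (γchir x) = J (P (Complex.I ^ e • (P x))) := by
          rw [hJhat, hγchir, LinearMap.smul_apply]
      _ = J (Complex.I ^ e • (P (P x))) := by rw [map_smul]
      _ = (starRingEnd ℂ) (Complex.I ^ e) • J (P (P x)) := by rw [hJsmul]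
      _ = (c * Complex.I ^ e) • J (c • x) := by rw [hconjI, hPPx]
      _ = (c * Complex.I ^ e) • (c • J x) := by rw [hJsmul, hconjc]
      _ = (c * Complex.I ^ e * c) • J x := by rw [smul_smul]
      _ = c • (Complex.I ^ e • (c • J x)) := by
          simp only [smul_smul, mul_assoc]
      _ = c • (Complex.I ^ e • (P (J (P x)))) := by
          rw [← hJP (P x), hPPx, hJsmul, hconjc]
      _ = c • γchir (Jhat x) := by
          rw [hγchir, hJhat, LinearMap.smul_apply]
end

section
/- Let γ_1^1,…,γ_1^{n_1} be a Clifford family on a complex vector space H_1 with n_1 even, χ ∈ End(H_1) with χ² = id and χ γ_1^a = −γ_1^a χ for all a, and let γ_2^1,…,γ_2^{n_2} be a Clifford family on H_2 with n_2 even. Set P_1 = γ_1^1⋯γ_1^{n_1}, P_2 = γ_2^1⋯γ_2^{n_2}, and let P be the ordered product of the combined Clifford family (iγ_1^1 ⊗ 1)⋯(iγ_1^{n_1} ⊗ 1)(χ ⊗ γ_2^1)⋯(χ ⊗ γ_2^{n_2}) on H_1 ⊗ H_2. Then P = (−1)^{n_1/2} P_1 ⊗ P_2. Moreover, with V = (1/√2)(1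 + iχ), one has (V ⊗ 1) P (V ⊗ 1)^{−1} = P. -/
/-!
Since `i² = -1` and `χ² = 1`, the even number of scalar factors `i` in the first block multiply
to `(-1)^{n₁/2}` and the even number of factors `χ` in the second block multiply to `1`, so the
ordered product splits as `(-1)^{n₁/2} P₁ ⊗ P₂`. Because `χ` anticommutes with each of the
evenly many `γ₁^a`, it commutes with `P₁`, hence so does `V`; and `(1 + iχ)(1 - iχ) = 2` makes
`W = (1/√2)(1 - iχ)` the inverse of `V`, so conjugation by `V ⊗ 1` fixes `P`.
-/

open TensorProduct

theorem TensorProduct.map_list_prod_map {R M N ι : Type*} [CommSemiring R] [AddCommMonoid M]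
    [Module R M] [AddCommMonoid N] [Module R N] (l : List ι) (f : ι → Module.End R M)
    (g : ι → Module.End R N) :
    map (l.map f).prod (l.map g).prod = (l.map fun i => map (f i) (g i)).prod := by
  induction l with
  | nil => exact TensorProduct.map_one
  | cons a t ih => simp only [List.map_cons, List.prod_cons, TensorProduct.map_mul, ih]

section Ring

variable {A : Type*} [Ring A]

theorem mul_list_prod_of_anticommute {x : A} {l : List A} (h : ∀ y ∈ l, x * y = -(y * x)) :
    x * l.prod = (-1) ^ l.length * (l.prod * x) := by
  induction l with
  | nil => simp
  | cons a t ih =>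
    rw [List.prod_cons, ← mul_assoc, h a List.mem_cons_self, neg_mul, mul_assoc,
      ih fun y hy => h y (List.mem_cons_of_mem a hy),
      ((Commute.neg_one_right a).pow_right _).left_comm, List.length_cons, pow_succ]
    noncomm_ring

theorem Commute.list_prod_right_of_anticommute {x : A} {l : List A}
    (h : ∀ y ∈ l, x * y = -(y * x)) (hl : Even l.length) : Commute x l.prod := by
  rw [Commute, SemiconjBy, mul_list_prod_of_anticommute h, hl.neg_one_pow, one_mul]

variable [Algebra ℂ A]

theorem one_add_I_smul_mul_one_sub_I_smul {χ : A} (hχ : χ * χ = 1) :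
    (1 + Complex.I • χ) * (1 - Complex.I • χ) = 2 := by
  rw [mul_sub, add_mul, add_mul, smul_mul_smul_comm, Complex.I_mul_I, hχ, neg_one_smul, one_mul,
    mul_one, one_mul, add_comm _ (-1), add_sub_add_right_eq_sub, sub_neg_eq_add,
    one_add_one_eq_two]

theorem inv_sqrt_two_smul_one_add_I_smul_mul_inv_sqrt_two_smul_one_sub_I_smul {χ : A}
    (hχ : χ * χ = 1) :
    ((Real.sqrt 2 : ℂ)⁻¹ • (1 + Complex.I • χ)) * ((Real.sqrt 2 : ℂ)⁻¹ • (1 - Complex.I • χ))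
      = 1 := by
  have hsqrt : ((Real.sqrt 2 : ℂ)⁻¹ * (Real.sqrt 2 : ℂ)⁻¹) * 2 = 1 := by
    rw [← mul_inv, ← Complex.ofReal_mul, Real.mul_self_sqrt zero_le_two, Complex.ofReal_ofNat,
      inv_mul_cancel₀ two_ne_zero]
  rw [smul_mul_smul_comm, one_add_I_smul_mul_one_sub_I_smul hχ,
    show (2 : A) = (2 : ℂ) • 1 by rw [two_smul, one_add_one_eq_two], smul_smul, hsqrt, one_smul]

end Ring

theorem combined_P_even_even_general
    {H₁ H₂ : Type*} [AddCommGroup H₁] [Module ℂ H₁] [AddCommGroup H₂] [Module ℂ H₂]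
    {m₁ m₂ : ℕ}
    (γ₁ : Fin (2 * m₁) → Module.End ℂ H₁)
    (γ₂ : Fin (2 * m₂) → Module.End ℂ H₂)
    (χ : Module.End ℂ H₁)
    (hχsq : χ * χ = 1)
    (hχγ : ∀ a, χ * γ₁ a = -(γ₁ a * χ))
    (P₁ : Module.End ℂ H₁) (hP₁ : P₁ = ((List.finRange (2 * m₁)).map γ₁).prod)
    (P₂ : Module.End ℂ H₂) (hP₂ : P₂ = ((List.finRange (2 * m₂)).map γ₂).prod)
    (P : Module.End ℂ (H₁ ⊗[ℂ] H₂))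
    (hP : P = (((List.finRange (2 * m₁)).map fun a =>
          TensorProduct.map (Complex.I • γ₁ a) (1 : Module.End ℂ H₂))
        ++ ((List.finRange (2 * m₂)).map fun α => TensorProduct.map χ (γ₂ α))).prod)
    (V W : Module.End ℂ H₁)
    (hV : V = ((Real.sqrt 2 : ℂ))⁻¹ • ((1 : Module.End ℂ H₁) + Complex.I • χ))
    (hW : W = ((Real.sqrt 2 : ℂ))⁻¹ • ((1 : Module.End ℂ H₁) - Complex.I • χ)) :
    P = ((-1 : ℂ) ^ m₁) • TensorProduct.map P₁ P₂
    ∧ TensorProduct.map V (1 : Module.End ℂ H₂) * P * TensorProduct.map W (1 : Module.End ℂ H₂)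
        = P := by
  have hI : ((List.finRange (2 * m₁)).map fun a => Complex.I • γ₁ a).prod
      = (-1 : ℂ) ^ m₁ • P₁ := by
    rw [hP₁, show (fun a => Complex.I • γ₁ a) = (Complex.I • ·) ∘ γ₁ from rfl, ← List.map_map,
      ← List.smul_prod, List.length_map, List.length_finRange, pow_mul, Complex.I_sq]
  have hχ : ((List.finRange (2 * m₂)).map fun _ => χ).prod = 1 := by
    rw [List.map_const', List.prod_replicate, List.length_finRange, pow_mul, sq, hχsq, one_pow]
  have hPeq : P = (-1 : ℂ) ^ m₁ • map P₁ P₂ := by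
    rw [hP, List.prod_append, ← map_list_prod_map, ← map_list_prod_map, hI, hχ, List.map_const',
      List.prod_replicate, one_pow, ← hP₂, map_smul_left, smul_mul_assoc,
      ← TensorProduct.map_mul, mul_one, one_mul]
  have hχP₁ : Commute χ P₁ := hP₁ ▸ Commute.list_prod_right_of_anticommute
    (List.forall_mem_map.2 fun a _ => hχγ a) (by simp)
  have hVP₁ : Commute V P₁ :=
    hV ▸ ((Commute.one_left P₁).add_left (hχP₁.smul_left Complex.I)).smul_left _
  have hVW : V * W = 1 :=
    hV ▸ hW ▸ inv_sqrt_two_smul_one_add_I_smul_mul_inv_sqrt_two_smul_one_sub_I_smul hχsq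
  refine ⟨hPeq, ?_⟩
  rw [hPeq, mul_smul_comm, smul_mul_assoc, ← TensorProduct.map_mul, ← TensorProduct.map_mul,
    hVP₁.eq, mul_assoc, hVW, mul_one, one_mul, mul_one]

/-- for the combined Clifford family `(iγ₁^a ⊗ 1, χ ⊗ γ₂^α)` with `n₁ = 2m₁`
and `n₂ = 2m₂` both even, the ordered product `P` of all the combined gamma matrices equals
`(−1)^{n₁/2} P₁ ⊗ P₂`, and it is fixed by conjugation with `V ⊗ 1`, `V = (1/√2)(1 + iχ)`. -/
theorem combined_P_even_even
    {H₁ H₂ : Type*} [AddCommGroup H₁] [Module ℂ H₁] [AddCommGroup H₂] [Module ℂ H₂]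
    {m₁ m₂ : ℕ}
    (γ₁ : Fin (2 * m₁) → Module.End ℂ H₁) (η₁ : Fin (2 * m₁) → ℂ)
    (γ₂ : Fin (2 * m₂) → Module.End ℂ H₂) (η₂ : Fin (2 * m₂) → ℂ)
    (hη₁ : ∀ a, η₁ a = 1 ∨ η₁ a = -1)
    (hη₂ : ∀ α, η₂ α = 1 ∨ η₂ α = -1)
    (hcl₁ : ∀ a b, γ₁ a * γ₁ b + γ₁ b * γ₁ a
      = (2 * η₁ a * (if a = b then 1 else 0)) • (1 : Module.End ℂ H₁))
    (hcl₂ : ∀ α β, γ₂ α * γ₂ β + γ₂ β * γ₂ α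
      = (2 * η₂ α * (if α = β then 1 else 0)) • (1 : Module.End ℂ H₂))
    (χ : Module.End ℂ H₁)
    (hχsq : χ * χ = 1)
    (hχγ : ∀ a, χ * γ₁ a = -(γ₁ a * χ))
    (P₁ : Module.End ℂ H₁) (hP₁ : P₁ = ((List.finRange (2 * m₁)).map γ₁).prod)
    (P₂ : Module.End ℂ H₂) (hP₂ : P₂ = ((List.finRange (2 * m₂)).map γ₂).prod)
    (P : Module.End ℂ (H₁ ⊗[ℂ] H₂))
    (hP : P = (((List.finRange (2 * m₁)).map fun a =>
          TensorProduct.map (Complex.I • γ₁ a) (1 : Module.End ℂ H₂))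
        ++ ((List.finRange (2 * m₂)).map fun α => TensorProduct.map χ (γ₂ α))).prod)
    (V W : Module.End ℂ H₁)
    (hV : V = ((Real.sqrt 2 : ℂ))⁻¹ • ((1 : Module.End ℂ H₁) + Complex.I • χ))
    (hW : W = ((Real.sqrt 2 : ℂ))⁻¹ • ((1 : Module.End ℂ H₁) - Complex.I • χ)) :
    P = ((-1 : ℂ) ^ m₁) • TensorProduct.map P₁ P₂
    ∧ TensorProduct.map V (1 : Module.End ℂ H₂) * P * TensorProduct.map W (1 : Module.End ℂ H₂)
        = P :=
  combined_P_even_even_general γ₁ γ₂ χ hχsq hχγ P₁ hP₁ P₂ hP₂ P hP V W hV hW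
end

section
/- Let γ_1^1,…,γ_1^{n_1} be a Clifford family on a complex vector space H_1 with n_1 odd, and γ_2^1,…,γ_2^{n_2} a Clifford family on H_2 with n_2 odd. Set P_1 = γ_1^1⋯γ_1^{n_1} and P_2 = γ_2^1⋯γ_2^{n_2}. Let P be the ordered product of the doubled Clifford family Γ^a = [[0, γ_1^a],[−γ_1^a, 0]] ⊗ 1 (a = 1,…,n_1) followed by Γ^{n_1+α} = [[0,1],[1,0]] ⊗ γ_2^α (α = 1,…,n_2) on (H_1 ⊕ H_1) ⊗ H_2. Then P = (−1)^{(n_1−1)/2} [[P_1, 0],[0, −P_1]] ⊗ P_2; in particular the compression of P to the first block is (−1)^{(n_1−1)/2} P_1 ⊗ P_2. -/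
/-!
Write `J = [[0, 1], [-1, 0]]`, `σ = [[0, 1], [1, 0]]` and `blkDiag A = [[A, 0], [0, A]]`.
Then `[[0, γ], [-γ, 0]] = J * blkDiag γ` with `J` commuting with every `blkDiag γ`, so the first
`n₁` factors multiply to `J ^ n₁ * blkDiag P₁ ⊗ 1`, and the last `n₂` to `σ ^ n₂ ⊗ P₂`.
Since `J² = -1` and `σ² = 1`, for odd `n₁ = 2m₁ + 1`, `n₂` this is
`(-1)^m₁ (J * blkDiag P₁ * σ) ⊗ P₂ = (-1)^m₁ [[P₁, 0], [0, -P₁]] ⊗ P₂`.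
-/

open TensorProduct

/-- The endomorphism of `H ⊕ H` given by the 2×2 block matrix `[[A, B], [C, D]]`
of endomorphisms of `H`. -/
noncomputable def blk {H : Type*} [AddCommGroup H] [Module ℂ H]
    (A B C D : Module.End ℂ H) : Module.End ℂ (H × H) :=
  LinearMap.prod
    (A.comp (LinearMap.fst ℂ H H) + B.comp (LinearMap.snd ℂ H H))
    (C.comp (LinearMap.fst ℂ H H) + D.comp (LinearMap.snd ℂ H H))

theorem List.prod_map_mul_left_of_commute {ι M : Type*} [Monoid M] (x : M) (f : ι → M)
    (hx : ∀ i, Commute x (f i)) (l : List ι) :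
    (l.map fun i => x * f i).prod = x ^ l.length * (l.map f).prod := by
  induction l with
  | nil => simp
  | cons i l ih =>
    rw [List.map_cons, List.prod_cons, ih, List.length_cons, List.map_cons, List.prod_cons,
      pow_succ', mul_assoc, mul_assoc, ← mul_assoc (f i), ← ((hx i).pow_left _).eq, mul_assoc]

theorem TensorProduct.list_prod_map_map {ι R M N : Type*} [CommSemiring R]
    [AddCommMonoid M] [Module R M] [AddCommMonoid N] [Module R N]
    (f : ι → Module.End R M) (g : ι → Module.End R N) (l : List ι) :
    (l.map fun i => map (f i) (g i)).prod = map (l.map f).prod (l.map g).prod := by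
  induction l with
  | nil => simp
  | cons i l ih => simp only [List.map_cons, List.prod_cons, ih, TensorProduct.map_mul]

section BlockMatrix

variable {H : Type*} [AddCommGroup H] [Module ℂ H]

theorem blk_mul (A B C D A' B' C' D' : Module.End ℂ H) :
    blk A B C D * blk A' B' C' D' =
      blk (A * A' + B * C') (A * B' + B * D') (C * A' + D * C') (C * B' + D * D') := by
  ext x <;> simp [blk]

theorem blk_one : blk (1 : Module.End ℂ H) 0 0 1 = 1 := by
  ext x <;> simp [blk]

theorem fst_comp_blk_comp_inl (A B C D : Module.End ℂ H) :
    (LinearMap.fst ℂ H H).comp ((blk A B C D).comp (LinearMap.inl ℂ H H)) = A := by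
  ext x; simp [blk]

noncomputable def blkDiag : Module.End ℂ H →* Module.End ℂ (H × H) where
  toFun A := blk A 0 0 A
  map_one' := blk_one
  map_mul' A B := by simp [blk_mul]

theorem blk_antidiag_eq (A : Module.End ℂ H) :
    blk 0 A (-A) 0 = blk 0 1 (-1) 0 * blkDiag A := by
  simp [blkDiag, blk_mul]

theorem commute_blk_antidiag_blkDiag (A : Module.End ℂ H) :
    Commute (blk 0 1 (-1) 0) (blkDiag A) := by
  simp [Commute, SemiconjBy, blkDiag, blk_mul]

theorem blk_antidiag_pow_odd (m : ℕ) :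
    blk (0 : Module.End ℂ H) 1 (-1) 0 ^ (2 * m + 1) = (-1 : ℂ) ^ m • blk 0 1 (-1) 0 := by
  have hsq : blk (0 : Module.End ℂ H) 1 (-1) 0 ^ 2 = (-1 : ℂ) • 1 := by
    ext x <;> simp [sq, blk]
  rw [pow_succ, pow_mul, hsq, smul_pow, one_pow, smul_mul_assoc, one_mul]

theorem blk_swap_pow_odd (m : ℕ) :
    blk (0 : Module.End ℂ H) 1 1 0 ^ (2 * m + 1) = blk 0 1 1 0 := by
  have hsq : blk (0 : Module.End ℂ H) 1 1 0 ^ 2 = 1 := by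
    rw [sq, blk_mul, ← blk_one]; simp
  rw [pow_succ, pow_mul, hsq, one_pow, one_mul]

theorem list_prod_map_blk_antidiag {ι : Type*} (γ : ι → Module.End ℂ H) (l : List ι) :
    (l.map fun i => blk 0 (γ i) (-γ i) 0).prod =
      blk 0 1 (-1) 0 ^ l.length * blkDiag (l.map γ).prod := by
  have hfactor : (fun i => blk 0 (γ i) (-γ i) 0) = fun i => blk 0 1 (-1) 0 * blkDiag (γ i) :=
    funext fun i => blk_antidiag_eq (γ i)
  rw [hfactor, map_list_prod, List.map_map]
  exact List.prod_map_mul_left_of_commute _ _ (fun i => commute_blk_antidiag_blkDiag (γ i)) l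

end BlockMatrix

theorem doubled_P_odd_odd_general
    {H₁ H₂ : Type*} [AddCommGroup H₁] [Module ℂ H₁] [AddCommGroup H₂] [Module ℂ H₂]
    {m₁ m₂ : ℕ}
    (γ₁ : Fin (2 * m₁ + 1) → Module.End ℂ H₁)
    (γ₂ : Fin (2 * m₂ + 1) → Module.End ℂ H₂)
    (P₁ : Module.End ℂ H₁) (hP₁ : P₁ = ((List.finRange (2 * m₁ + 1)).map γ₁).prod)
    (P₂ : Module.End ℂ H₂) (hP₂ : P₂ = ((List.finRange (2 * m₂ + 1)).map γ₂).prod)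
    (P : Module.End ℂ ((H₁ × H₁) ⊗[ℂ] H₂))
    (hP : P = (((List.finRange (2 * m₁ + 1)).map fun a =>
          TensorProduct.map (blk 0 (γ₁ a) (-(γ₁ a)) 0) (1 : Module.End ℂ H₂))
        ++ ((List.finRange (2 * m₂ + 1)).map fun α =>
          TensorProduct.map (blk 0 1 1 0) (γ₂ α))).prod) :
    P = ((-1 : ℂ) ^ m₁) • TensorProduct.map (blk P₁ 0 0 (-P₁)) P₂
    ∧ (TensorProduct.map (LinearMap.fst ℂ H₁ H₁) (LinearMap.id : H₂ →ₗ[ℂ] H₂)).comp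
        (P.comp (TensorProduct.map (LinearMap.inl ℂ H₁ H₁) (LinearMap.id : H₂ →ₗ[ℂ] H₂)))
      = ((-1 : ℂ) ^ m₁) • TensorProduct.map P₁ P₂ := by
  have hfirst : P = ((-1 : ℂ) ^ m₁) • map (blk P₁ 0 0 (-P₁)) P₂ := by
    have hblocks : blk 0 1 (-1) 0 * blkDiag P₁ * blk 0 1 1 0 = blk P₁ 0 0 (-P₁) := by
      simp [blkDiag, blk_mul]
    rw [hP, List.prod_append, list_prod_map_map, list_prod_map_map, list_prod_map_blk_antidiag,
      List.map_const', List.map_const', List.prod_replicate, List.prod_replicate, one_pow,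
      List.length_finRange, List.length_finRange, blk_antidiag_pow_odd, blk_swap_pow_odd,
      ← hP₁, ← hP₂, ← TensorProduct.map_mul, one_mul, smul_mul_assoc, smul_mul_assoc, hblocks,
      map_smul_left]
  refine ⟨hfirst, ?_⟩
  rw [hfirst, LinearMap.smul_comp, LinearMap.comp_smul, ← map_comp, ← map_comp,
    LinearMap.comp_id, LinearMap.id_comp, fst_comp_blk_comp_inl]

/-- for the doubled Clifford family with both `n₁ = 2m₁+1` and
`n₂ = 2m₂+1` odd, the ordered product `P` of the doubled gamma matrices equals
`(−1)^{(n₁−1)/2} [[P₁,0],[0,−P₁]] ⊗ P₂`; in particular its compression to the first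
block is `(−1)^{(n₁−1)/2} P₁ ⊗ P₂`. -/
theorem doubled_P_odd_odd
    {H₁ H₂ : Type*} [AddCommGroup H₁] [Module ℂ H₁] [AddCommGroup H₂] [Module ℂ H₂]
    {m₁ m₂ : ℕ}
    (γ₁ : Fin (2 * m₁ + 1) → Module.End ℂ H₁) (η₁ : Fin (2 * m₁ + 1) → ℂ)
    (γ₂ : Fin (2 * m₂ + 1) → Module.End ℂ H₂) (η₂ : Fin (2 * m₂ + 1) → ℂ)
    (hη₁ : ∀ a, η₁ a = 1 ∨ η₁ a = -1)
    (hη₂ : ∀ α, η₂ α = 1 ∨ η₂ α = -1)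
    (hcl₁ : ∀ a b, γ₁ a * γ₁ b + γ₁ b * γ₁ a
      = (2 * η₁ a * (if a = b then 1 else 0)) • (1 : Module.End ℂ H₁))
    (hcl₂ : ∀ α β, γ₂ α * γ₂ β + γ₂ β * γ₂ α
      = (2 * η₂ α * (if α = β then 1 else 0)) • (1 : Module.End ℂ H₂))
    (P₁ : Module.End ℂ H₁) (hP₁ : P₁ = ((List.finRange (2 * m₁ + 1)).map γ₁).prod)
    (P₂ : Module.End ℂ H₂) (hP₂ : P₂ = ((List.finRange (2 * m₂ + 1)).map γ₂).prod)
    (P : Module.End ℂ ((H₁ × H₁) ⊗[ℂ] H₂))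
    (hP : P = (((List.finRange (2 * m₁ + 1)).map fun a =>
          TensorProduct.map (blk 0 (γ₁ a) (-(γ₁ a)) 0) (1 : Module.End ℂ H₂))
        ++ ((List.finRange (2 * m₂ + 1)).map fun α =>
          TensorProduct.map (blk 0 1 1 0) (γ₂ α))).prod) :
    P = ((-1 : ℂ) ^ m₁) • TensorProduct.map (blk P₁ 0 0 (-P₁)) P₂
    ∧ (TensorProduct.map (LinearMap.fst ℂ H₁ H₁) (LinearMap.id : H₂ →ₗ[ℂ] H₂)).comp
        (P.comp (TensorProduct.map (LinearMap.inl ℂ H₁ H₁) (LinearMap.id : H₂ →ₗ[ℂ] H₂)))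
      = ((-1 : ℂ) ^ m₁) • TensorProduct.map P₁ P₂ :=
  doubled_P_odd_odd_general γ₁ γ₂ P₁ hP₁ P₂ hP₂ P hP
end

section
/- (First-order condition) Let H_1, H_2 be complex vector spaces, p ∈ End(H_2) with p² = p, and d ∈ End(H_1); set D = d ⊗ 1 on H_1 ⊗ H_2. For any a_1, b_1 ∈ End(H_1) and a_2, b_2 ∈ End(H_2) with p a_2 = a_2 p and p b_2 = b_2 p, setting l = a_1 ⊗ p + 1 ⊗ a_2(1−p) and r = b_1 ⊗ (1−p) + 1 ⊗ b_2 p, one has [[D, l], r] = 0. -/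
open TensorProduct

lemma map_mul_map {H₁ H₂ : Type*} [AddCommGroup H₁] [Module ℂ H₁] [AddCommGroup H₂]
    [Module ℂ H₂] (f f' : Module.End ℂ H₁) (g g' : Module.End ℂ H₂) :
    TensorProduct.map f g * TensorProduct.map f' g'
      = TensorProduct.map (f * f') (g * g') :=
  (TensorProduct.map_mul f f' g g').symm

/-- first-order condition: with `D = d ⊗ 1`, and `l`, `r` the left and
right actions as in the zeroth-order condition, one has `[[D, l], r] = 0`. -/
theorem first_order_condition
    {H₁ H₂ : Type*} [AddCommGroup H₁] [Module ℂ H₁] [AddCommGroup H₂] [Module ℂ H₂]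
    (p : Module.End ℂ H₂) (hp : p * p = p)
    (d : Module.End ℂ H₁)
    (D : Module.End ℂ (H₁ ⊗[ℂ] H₂))
    (hD : D = TensorProduct.map d (1 : Module.End ℂ H₂))
    (a₁ b₁ : Module.End ℂ H₁) (a₂ b₂ : Module.End ℂ H₂)
    (ha₂ : p * a₂ = a₂ * p) (hb₂ : p * b₂ = b₂ * p)
    (l r : Module.End ℂ (H₁ ⊗[ℂ] H₂))
    (hl : l = TensorProduct.map a₁ p
      + TensorProduct.map (1 : Module.End ℂ H₁) (a₂ * (1 - p)))
    (hr : r = TensorProduct.map b₁ (1 - p)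
      + TensorProduct.map (1 : Module.End ℂ H₁) (b₂ * p)) :
    (D * l - l * D) * r - r * (D * l - l * D) = 0 := by
  subst hD hl hr
  have h1 : p * (1 - p) = 0 := by simp [mul_sub, hp]
  have h2 : (1 - p) * p = 0 := by simp [sub_mul, hp]
  have h3 : p * (b₂ * p) = b₂ * p := by rw [← mul_assoc, hb₂, mul_assoc, hp]
  have h4 : (b₂ * p) * p = b₂ * p := by rw [mul_assoc, hp]
  simp only [mul_add, add_mul, sub_mul, mul_sub, map_mul_map, one_mul, mul_one,
    mul_assoc, h1, h2, h3, h4, hp]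
  simp only [← mul_assoc, h1, h2, h3, h4]
  simp only [TensorProduct.map_zero_right]
  abel
end
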